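/- arXiv:2605.29361 — 2 statements merged into one kernel-verified Lean document; each statement's English description precedes it below -/
import Mathlib

section
/- Let T ≥ 2, 0 < a ≤ b, ε > 0, and fix vectors ρ_{ij} ∈ [a,b]^K for all i ≠ j in [T] with the property: for every directed cycle (i_1,...,i_L,i_1) on distinct vertices in [T], max_ℓ (1/K)∑_k ρ_{i_ℓ i_{ℓ+1}}^k ≥ 1 + ε. Let w_1,...,w_T be i.i.d. uniform on Δ_{K−1} and form the random directed graph G on [T] with edge i → j iff ⟨ρ_{ij}, w_j⟩ ≤ 1. Then P(G contains a directed cycle) ≤ C_T · exp(−K ε² / (4(b−a)²)), where C_T = ∑_{L=2}^T binom(T,L)(L−1)!. -/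
open MeasureTheory ProbabilityTheory Finset
open scoped ENNReal

/-- The uniform distribution on the simplex `Δ_{K-1}` (i.e. `Dirichlet(1,…,1)`),
realised as the law of `Y / (∑ Y)` with `Y k` i.i.d. `Exponential(1)`. -/
noncomputable def simplexUniform (K : ℕ) : Measure (Fin K → ℝ) :=
  (Measure.pi fun _ : Fin K => ProbabilityTheory.expMeasure 1).map
    (fun Y k => Y k / ∑ j, Y j)

/-!
A directed cycle survives only if each of its edges does, so the probability of some cycle is at
most the sum over cycles of the probability of the one edge `i → j` whose Carli mean is at least
`1 + ε`. Writing `w_j = Y / ∑ Y` with `Y` i.i.d. `Exponential(1)`, that edge is present iff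
`∑ (ρ_{ij,k} - 1) Y_k ≤ 0`. A Chernoff bound with the moment generating function
`E exp (-s Y) = 1 / (1 + s)` bounds this by `∏ (1 + t c_k)⁻¹` with `c_k = ρ_{ij,k} - 1`, and
`log (1 + x) ≥ x - x²` turns that into `exp (-K ε² / (4 (b - a)²))`. Counting cycles with their
least vertex first gives the factor `C_T`.
-/

open Real

lemma sub_sq_le_log_one_add {x : ℝ} (hx : -1 / 2 ≤ x) : x - x ^ 2 ≤ log (1 + x) := by
  let g : ℝ → ℝ := fun y => log (1 + y) - y + y ^ 2
  let g' : ℝ → ℝ := fun y => y * (1 + 2 * y) / (1 + y)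
  have hderiv : ∀ y, -1 < y → HasDerivAt g (g' y) y := fun y hy => by
    refine ((((hasDerivAt_id' y).const_add 1).log (by linarith)).sub (hasDerivAt_id' y)).add
      ((hasDerivAt_id' y).pow 2) |>.congr_deriv ?_
    have : 1 + y ≠ 0 := by linarith
    simp only [g', Nat.cast_ofNat]
    field_simp
    ring
  have hcont : ContinuousOn g (Set.Ici (-1 / 2)) := fun y hy =>
    (hderiv y (by linarith [Set.mem_Ici.1 hy])).continuousAt.continuousWithinAt
  suffices g 0 ≤ g x by
    simp only [g, add_zero, log_one, sub_self, zero_pow two_ne_zero] at this; linarith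
  rcases le_total 0 x with h | h
  · refine monotoneOn_of_hasDerivWithinAt_nonneg (f' := g') (convex_Ici 0)
      (hcont.mono (Set.Ici_subset_Ici.2 (by norm_num))) (fun y hy => ?_) (fun y hy => ?_)
      Set.self_mem_Ici h h
    all_goals rw [interior_Ici, Set.mem_Ioi] at hy
    · exact (hderiv y (by linarith)).hasDerivWithinAt
    · positivity
  · refine antitoneOn_of_hasDerivWithinAt_nonpos (f' := g') (convex_Icc (-1 / 2) 0)
      (hcont.mono Set.Icc_subset_Ici_self) (fun y hy => ?_) (fun y hy => ?_)
      ⟨hx, h⟩ (Set.right_mem_Icc.2 (by norm_num)) h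
    all_goals rw [interior_Icc, Set.mem_Ioo] at hy
    · exact (hderiv y (by linarith)).hasDerivWithinAt
    · exact div_nonpos_of_nonpos_of_nonneg (by nlinarith) (by linarith)

lemma neg_half_le_div_mul {c r ε : ℝ} (hε : 0 < ε) (hεr : ε ≤ r) (hc : |c| ≤ r) :
    -1 / 2 ≤ ε / (2 * r ^ 2) * c := by
  have hr : 0 < r := hε.trans_le hεr
  have htr : ε / (2 * r ^ 2) * r ≤ 1 / 2 := by
    rw [div_mul_eq_mul_div, div_le_iff₀ (by positivity)]
    nlinarith
  nlinarith [(abs_le.1 hc).1, show 0 ≤ ε / (2 * r ^ 2) by positivity]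

lemma exp_le_prod_one_add {ι : Type*} [Fintype ι] {c : ι → ℝ} {r ε : ℝ} (hε : 0 < ε)
    (hεr : ε ≤ r) (hc : ∀ i, |c i| ≤ r) (hmean : Fintype.card ι * ε ≤ ∑ i, c i) :
    exp (Fintype.card ι * ε ^ 2 / (4 * r ^ 2)) ≤ ∏ i, (1 + ε / (2 * r ^ 2) * c i) := by
  -- `t = ε / (2 r²)` maximises `t ε - t² r²`, a lower bound for the mean of `log (1 + t c i)`.
  set t := ε / (2 * r ^ 2) with ht_def
  have hlog : ∀ i, t * c i - t ^ 2 * r ^ 2 ≤ log (1 + t * c i) := fun i => by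
    have hsq : (t * c i) ^ 2 ≤ t ^ 2 * r ^ 2 := by
      rw [mul_pow, ← sq_abs (c i)]
      exact mul_le_mul_of_nonneg_left (pow_le_pow_left₀ (abs_nonneg _) (hc i) 2) (sq_nonneg t)
    linarith [sub_sq_le_log_one_add (neg_half_le_div_mul hε hεr (hc i))]
  have hpos : ∀ i, 0 < 1 + t * c i := fun i => by
    linarith [neg_half_le_div_mul hε hεr (hc i)]
  calc exp (Fintype.card ι * ε ^ 2 / (4 * r ^ 2))
      ≤ exp (∑ i, log (1 + t * c i)) := by
        gcongr
        calc (Fintype.card ι : ℝ) * ε ^ 2 / (4 * r ^ 2)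
            = t * (Fintype.card ι * ε) - Fintype.card ι * (t ^ 2 * r ^ 2) := by
              rw [ht_def]; field_simp; ring
          _ ≤ ∑ i, (t * c i - t ^ 2 * r ^ 2) := by
              rw [sum_sub_distrib, ← mul_sum, sum_const, card_univ, nsmul_eq_mul]
              gcongr
          _ ≤ ∑ i, log (1 + t * c i) := sum_le_sum fun i _ => hlog i
    _ = ∏ i, (1 + t * c i) := by
        rw [exp_sum]; exact prod_congr rfl fun i _ => exp_log (hpos i)

lemma lintegral_exp_neg_mul_expMeasure {r s : ℝ} (hr : 0 < r) (hs : -r < s) :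
    ∫⁻ y, ENNReal.ofReal (exp (-(s * y))) ∂expMeasure r = ENNReal.ofReal (r / (r + s)) := by
  have hrs : 0 < r + s := by linarith
  have hdensity : ∀ y, exponentialPDF r y * ENNReal.ofReal (exp (-(s * y)))
      = ENNReal.ofReal (r / (r + s)) * exponentialPDF (r + s) y := fun y => by
    rcases lt_or_ge y 0 with hy | hy
    · simp [exponentialPDF_of_neg hy]
    · rw [exponentialPDF_of_nonneg hy, exponentialPDF_of_nonneg hy,
        ← ENNReal.ofReal_mul (by positivity), ← ENNReal.ofReal_mul (by positivity)]
      congr 1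
      field_simp
      rw [← exp_add]
      ring_nf
  change ∫⁻ y, _ ∂(volume.withDensity (exponentialPDF r)) = _
  rw [lintegral_withDensity_eq_lintegral_mul _
    (show Measurable (exponentialPDF r) from (measurable_exponentialPDFReal r).ennreal_ofReal)
    (by fun_prop)]
  simp only [Pi.mul_apply, hdensity]
  rw [lintegral_const_mul _ (show Measurable (exponentialPDF (r + s)) from
      (measurable_exponentialPDFReal _).ennreal_ofReal),
    lintegral_exponentialPDF_eq_one hrs, mul_one]

lemma ae_pos_expMeasure {r : ℝ} : ∀ᵐ y ∂expMeasure r, 0 < y := by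
  rw [ae_iff]
  simp only [not_lt]
  change volume.withDensity (exponentialPDF r) (Set.Iic 0) = 0
  rw [withDensity_apply _ measurableSet_Iic, ← setLIntegral_congr Iio_ae_eq_Iic]
  exact lintegral_exponentialPDF_of_nonpos le_rfl

lemma lintegral_pi_prod_eq_prod {ι : Type*} [Fintype ι] {X : ι → Type*}
    [∀ i, MeasurableSpace (X i)] (μ : ∀ i, Measure (X i)) [∀ i, IsProbabilityMeasure (μ i)]
    {f : ∀ i, X i → ℝ≥0∞} (hf : ∀ i, Measurable (f i)) :
    ∫⁻ x, ∏ i, f i (x i) ∂Measure.pi μ = ∏ i, ∫⁻ y, f i y ∂μ i := by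
  rw [lintegral_prod_eq_prod_lintegral_of_indepFun _ _
    (iIndepFun_pi fun i => (hf i).aemeasurable) fun i => (hf i).comp (measurable_pi_apply i)]
  exact prod_congr rfl fun i _ => (measurePreserving_eval μ i).lintegral_comp (hf i)

lemma pi_expMeasure_sum_mul_nonpos_le {ι : Type*} [Fintype ι] {c : ι → ℝ} {t : ℝ}
    (ht : 0 ≤ t) (hc : ∀ i, 0 < 1 + t * c i) :
    Measure.pi (fun _ : ι => expMeasure 1) {Y | ∑ i, c i * Y i ≤ 0}
      ≤ ENNReal.ofReal (∏ i, (1 + t * c i))⁻¹ := by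
  have := isProbabilityMeasure_expMeasure one_pos
  let F : (ι → ℝ) → ℝ≥0∞ := fun Y => ∏ i, ENNReal.ofReal (exp (-(t * c i * Y i)))
  have hmarkov : {Y : ι → ℝ | ∑ i, c i * Y i ≤ 0} ⊆ {Y | 1 ≤ F Y} := fun Y hY => by
    simp only [Set.mem_ofPred_eq, F, ← ENNReal.ofReal_prod_of_nonneg fun i _ => (exp_pos _).le,
      ← exp_sum, ENNReal.one_le_ofReal, one_le_exp_iff]
    rw [sum_neg_distrib, neg_nonneg]
    simp only [mul_assoc, ← mul_sum]
    exact mul_nonpos_of_nonneg_of_nonpos ht (by simpa using hY)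
  calc Measure.pi (fun _ : ι => expMeasure 1) {Y | ∑ i, c i * Y i ≤ 0}
      ≤ Measure.pi (fun _ : ι => expMeasure 1) {Y | 1 ≤ F Y} := measure_mono hmarkov
    _ ≤ ∫⁻ Y, F Y ∂Measure.pi (fun _ : ι => expMeasure 1) := by
        simpa using mul_meas_ge_le_lintegral₀ (μ := Measure.pi fun _ : ι => expMeasure 1)
          (by fun_prop : Measurable F).aemeasurable 1
    _ = ∏ i, ENNReal.ofReal (1 / (1 + t * c i)) := by
        refine (lintegral_pi_prod_eq_prod _
          (f := fun i y => ENNReal.ofReal (exp (-(t * c i * y)))) fun i => by fun_prop).trans ?_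
        exact prod_congr rfl fun i _ =>
          lintegral_exp_neg_mul_expMeasure one_pos (by linarith [hc i])
    _ = ENNReal.ofReal (∏ i, (1 + t * c i))⁻¹ := by
        rw [← prod_inv_distrib, ENNReal.ofReal_prod_of_nonneg fun i _ => (inv_pos.2 (hc i)).le]
        simp only [one_div]

lemma ae_pi_expMeasure_pos {ι : Type*} [Fintype ι] :
    ∀ᵐ Y ∂Measure.pi (fun _ : ι => expMeasure 1), ∀ i, 0 < Y i := by
  have := isProbabilityMeasure_expMeasure one_pos
  exact ae_all_iff.2 fun i => Measure.tendsto_eval_ae_ae.eventually ae_pos_expMeasure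

lemma pi_expMeasure_sum_mul_nonpos_le_exp {ι : Type*} [Fintype ι] [Nonempty ι] {c : ι → ℝ}
    {a b ε : ℝ} (hε : 0 < ε) (hc : ∀ i, a ≤ c i ∧ c i ≤ b)
    (hmean : Fintype.card ι * ε ≤ ∑ i, c i) :
    Measure.pi (fun _ : ι => expMeasure 1) {Y | ∑ i, c i * Y i ≤ 0}
      ≤ ENNReal.ofReal (exp (-(Fintype.card ι * ε ^ 2) / (4 * (b - a) ^ 2))) := by
  -- For `a ≤ 0 < ε ≤ b` all `|c i| ≤ b - a`; for `a > 0` the event is null.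
  rcases le_or_gt a 0 with ha | ha
  · have hεb : ε ≤ b := by
      have : ∑ i, c i ≤ Fintype.card ι * b := by
        simpa using sum_le_sum fun i (_ : i ∈ univ) => (hc i).2
      have hcard : (0 : ℝ) < Fintype.card ι := by exact_mod_cast Fintype.card_pos
      nlinarith
    have hcr : ∀ i, |c i| ≤ b - a := fun i =>
      abs_le.2 ⟨by linarith [(hc i).1], by linarith [(hc i).2]⟩
    have hpos : ∀ i, 0 < 1 + ε / (2 * (b - a) ^ 2) * c i := fun i => by
      linarith [neg_half_le_div_mul hε (by linarith) (hcr i)]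
    refine (pi_expMeasure_sum_mul_nonpos_le (by positivity) hpos).trans
      (ENNReal.ofReal_le_ofReal ?_)
    rw [neg_div, exp_neg]
    exact inv_anti₀ (exp_pos _) (exp_le_prod_one_add hε (by linarith) hcr hmean)
  · refine (measure_eq_zero_iff_ae_notMem.2 ?_).trans_le zero_le
    filter_upwards [ae_pi_expMeasure_pos] with Y hY
    simp only [not_le]
    exact sum_pos (fun i _ => mul_pos (ha.trans_le (hc i).1) (hY i)) univ_nonempty

lemma simplexUniform_le_pi_expMeasure (K : ℕ) (ρ : Fin K → ℝ) :
    simplexUniform K {v | ∑ k, ρ k * v k ≤ 1}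
      ≤ Measure.pi (fun _ : Fin K => expMeasure 1) {Y | ∑ k, (ρ k - 1) * Y k ≤ 0} := by
  rw [simplexUniform,
    Measure.map_apply (by fun_prop) (measurableSet_le (by fun_prop) (by fun_prop))]
  refine measure_mono_ae ?_
  filter_upwards [ae_pi_expMeasure_pos] with Y hY hmem
  change ∑ k, ρ k * (Y k / ∑ j, Y j) ≤ 1 at hmem
  change ∑ k, (ρ k - 1) * Y k ≤ 0
  simp only [← mul_div_assoc, ← sum_div] at hmem
  rcases isEmpty_or_nonempty (Fin K) with hK | hK
  · simp
  · have hS : 0 < ∑ k, Y k := sum_pos (fun k _ => hY k) univ_nonempty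
    rw [div_le_one hS] at hmem
    simpa [sub_mul, sum_sub_distrib] using hmem

lemma simplexUniform_sum_mul_le_one_le {K : ℕ} {ρ : Fin K → ℝ} {a b ε : ℝ} (hε : 0 < ε)
    (hρ : ∀ k, a ≤ ρ k ∧ ρ k ≤ b) (hcarli : 1 + ε ≤ (1 / K : ℝ) * ∑ k, ρ k) :
    simplexUniform K {v | ∑ k, ρ k * v k ≤ 1}
      ≤ ENNReal.ofReal (exp (-(K * ε ^ 2) / (4 * (b - a) ^ 2))) := by
  have hK : (0 : ℝ) < K := by
    by_contra h
    simp only [le_antisymm (not_lt.1 h) K.cast_nonneg, div_zero, zero_mul] at hcarli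
    linarith
  have : Nonempty (Fin K) := Fin.pos_iff_nonempty.1 (by exact_mod_cast hK)
  have hmean : (Fintype.card (Fin K) : ℝ) * ε ≤ ∑ k, (ρ k - 1) := by
    rw [one_div, inv_mul_eq_div, le_div_iff₀ hK] at hcarli
    simp only [Fintype.card_fin, sum_sub_distrib, sum_const, card_univ, nsmul_eq_mul, mul_one]
    linarith
  have h := pi_expMeasure_sum_mul_nonpos_le_exp hε
    (fun k => ⟨sub_le_sub_right (hρ k).1 1, sub_le_sub_right (hρ k).2 1⟩) hmean
  rw [sub_sub_sub_cancel_right, Fintype.card_fin] at h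
  exact (simplexUniform_le_pi_expMeasure K ρ).trans h

/-- Injective `f : Fin n → α`, read as the cycle `f 0 → f 1 → ⋯ → f (n - 1) → f 0`, normalised
under rotation by starting at the least vertex. -/
def cycleReps (α : Type*) [Fintype α] [LinearOrder α] (n : ℕ) [NeZero n] :
    Finset (Fin n → α) :=
  {f | Function.Injective f ∧ ∀ m, f 0 ≤ f m}

section cycleReps

variable {α : Type*} [Fintype α] [LinearOrder α] {n : ℕ} [NeZero n]

lemma exists_mem_cycleReps_of_injective {E : α → α → Prop} {f : Fin n → α}
    (hf : Function.Injective f) (hE : ∀ ℓ, E (f ℓ) (f (ℓ + 1))) :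
    ∃ g ∈ cycleReps α n, ∀ ℓ, E (g ℓ) (g (ℓ + 1)) := by
  obtain ⟨m, hm⟩ := Finite.exists_min f
  refine ⟨fun x => f (x + m), mem_filter.2 ⟨mem_univ _, hf.comp (add_left_injective m),
    fun x => by simpa using hm (x + m)⟩, fun ℓ => ?_⟩
  simpa [add_right_comm] using hE (ℓ + m)

lemma eq_of_rotate_eq {f g : Fin n → α} (hf : f ∈ cycleReps α n) (hg : g ∈ cycleReps α n)
    {r s : Fin n} (h : ∀ x, f (x + r) = g (x + s)) : r = s ∧ f = g := by
  obtain ⟨hf_inj, hf_min⟩ := (mem_filter.1 hf).2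
  obtain ⟨-, hg_min⟩ := (mem_filter.1 hg).2
  have hfg : f (-s + r) = g 0 := by simpa using h (-s)
  have hgf : g (-r + s) = f 0 := by simpa using (h (-r)).symm
  have h0 : f 0 = g 0 := le_antisymm (hfg ▸ hf_min _) (hgf ▸ hg_min _)
  have hrs : r = s := by
    have := hf_inj (hfg.trans h0.symm)
    rwa [neg_add_eq_zero, eq_comm] at this
  subst hrs
  exact ⟨rfl, funext fun x => by simpa using h (x - r)⟩

lemma card_cycleReps_le :
    #(cycleReps α n) ≤ (Fintype.card α).choose n * (n - 1).factorial := by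
  let rotate : cycleReps α n × Fin n → (Fin n ↪ α) := fun p =>
    ⟨fun x => p.1.1 (x + p.2), ((mem_filter.1 p.1.2).2.1).comp (add_left_injective p.2)⟩
  have hrotate : Function.Injective rotate := by
    rintro ⟨⟨f, hf⟩, r⟩ ⟨⟨g, hg⟩, s⟩ h
    obtain ⟨rfl, rfl⟩ := eq_of_rotate_eq hf hg fun x => DFunLike.congr_fun h x
    rfl
  have := Fintype.card_le_of_injective rotate hrotate
  rw [Fintype.card_prod, Fintype.card_coe, Fintype.card_fin, Fintype.card_embedding_eq,
    Fintype.card_fin, Nat.descFactorial_eq_factorial_mul_choose,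
    ← Nat.mul_factorial_pred (NeZero.ne n)] at this
  exact Nat.le_of_mul_le_mul_right (by linarith) (Nat.pos_of_neZero n)

end cycleReps

lemma measure_exists_cycle_le {Ω α : Type*} [MeasurableSpace Ω] [Fintype α] [LinearOrder α]
    (P : Measure Ω) (E : α → α → Set Ω) {p : ℝ≥0∞}
    (hcycle : ∀ (L : ℕ) (f : Fin (L + 2) → α), Function.Injective f →
      ∃ ℓ, P (E (f ℓ) (f (ℓ + 1))) ≤ p) :
    P {ω | ∃ (L : ℕ) (f : Fin (L + 2) → α), Function.Injective f ∧ ∀ ℓ, ω ∈ E (f ℓ) (f (ℓ + 1))}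
      ≤ (∑ n ∈ Icc 2 (Fintype.card α),
          ((Fintype.card α).choose n * (n - 1).factorial : ℝ≥0∞)) * p := by
  let cycleEvent (L : ℕ) (f : Fin (L + 2) → α) : Set Ω := {ω | ∀ ℓ, ω ∈ E (f ℓ) (f (ℓ + 1))}
  have hcover : {ω | ∃ (L : ℕ) (f : Fin (L + 2) → α), Function.Injective f ∧
      ∀ ℓ, ω ∈ E (f ℓ) (f (ℓ + 1))}
      ⊆ ⋃ L ∈ range (Fintype.card α - 1), ⋃ f ∈ cycleReps α (L + 2), cycleEvent L f := by
    rintro ω ⟨L, f, hf, hω⟩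
    have hL : L + 2 ≤ Fintype.card α := by simpa using Fintype.card_le_of_injective f hf
    obtain ⟨g, hg, hgω⟩ := exists_mem_cycleReps_of_injective (E := fun i j => ω ∈ E i j) hf hω
    simp only [Set.mem_iUnion]
    exact ⟨L, mem_range.2 (by omega), g, hg, hgω⟩
  have hevent : ∀ L, ∀ f ∈ cycleReps α (L + 2), P (cycleEvent L f) ≤ p := fun L f hf => by
    obtain ⟨ℓ, hℓ⟩ := hcycle L f (mem_filter.1 hf).2.1
    exact (measure_mono (s := cycleEvent L f) fun ω hω => hω ℓ).trans hℓ
  calc _ ≤ P (⋃ L ∈ range (Fintype.card α - 1), ⋃ f ∈ cycleReps α (L + 2), cycleEvent L f) :=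
        measure_mono hcover
    _ ≤ ∑ L ∈ range (Fintype.card α - 1), ∑ f ∈ cycleReps α (L + 2), P (cycleEvent L f) :=
        (measure_biUnion_finset_le _ _).trans (sum_le_sum fun L _ => measure_biUnion_finset_le _ _)
    _ ≤ ∑ L ∈ range (Fintype.card α - 1),
          ((Fintype.card α).choose (L + 2) * (L + 2 - 1).factorial : ℝ≥0∞) * p := by
        refine sum_le_sum fun L _ => (sum_le_card_nsmul _ _ _ (hevent L)).trans ?_
        rw [nsmul_eq_mul]
        gcongr
        exact_mod_cast card_cycleReps_le
    _ = _ := by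
        rw [← sum_mul, ← Ico_add_one_right_eq_Icc, sum_Ico_eq_sum_range]
        simp [add_comm]

theorem prob_directed_cycle_bound_general
    {Ω : Type*} [MeasureSpace Ω] (P : Measure Ω)
    (T K : ℕ)
    (a b ε : ℝ) (hε : 0 < ε)
    (ρ : Fin T → Fin T → Fin K → ℝ)
    (hbd : ∀ i j, i ≠ j → ∀ k, a ≤ ρ i j k ∧ ρ i j k ≤ b)
    (hdisp : ∀ (L : ℕ), ∀ f : Fin (L + 2) → Fin T, Function.Injective f →
      ∃ ℓ : Fin (L + 2), 1 + ε ≤ ((1 : ℝ) / K) * ∑ k, ρ (f ℓ) (f (ℓ + 1)) k)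
    (w : Fin T → Ω → (Fin K → ℝ))
    (hmeas : ∀ i, Measurable (w i))
    (hdist : ∀ i, P.map (w i) = simplexUniform K) :
    P {ω | ∃ (L : ℕ) (f : Fin (L + 2) → Fin T), Function.Injective f ∧
        ∀ ℓ : Fin (L + 2), ∑ k, ρ (f ℓ) (f (ℓ + 1)) k * w (f (ℓ + 1)) ω k ≤ 1}
      ≤ (∑ L ∈ Finset.Icc 2 T, (Nat.choose T L * Nat.factorial (L - 1) : ℝ≥0∞)) *
        ENNReal.ofReal (Real.exp (-(K * ε ^ 2) / (4 * (b - a) ^ 2))) := by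
  have hedge : ∀ i j, i ≠ j → 1 + ε ≤ (1 / K : ℝ) * ∑ k, ρ i j k →
      P (w j ⁻¹' {v | ∑ k, ρ i j k * v k ≤ 1})
        ≤ ENNReal.ofReal (exp (-(K * ε ^ 2) / (4 * (b - a) ^ 2))) := fun i j hij hcarli => by
    rw [← Measure.map_apply (hmeas j) (measurableSet_le (by fun_prop) (by fun_prop)), hdist]
    exact simplexUniform_sum_mul_le_one_le hε (hbd i j hij) hcarli
  simpa using measure_exists_cycle_le P (fun i j => w j ⁻¹' {v | ∑ k, ρ i j k * v k ≤ 1})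
    fun L f hf => (hdisp L f hf).imp fun ℓ => hedge _ _ (hf.ne (by simp))

/-- If all price ratios lie in `[a,b]` and on every directed cycle of distinct
vertices some edge has Carli mean at least `1 + ε`, then for i.i.d. uniform
budget shares the probability that the revealed-preference graph
(edge `i → j` iff `⟨ρ_{ij}, w_j⟩ ≤ 1`) contains a directed cycle is at most
`C_T * exp (-K ε² / (4 (b-a)²))`, where `C_T = ∑_{L=2}^T (T choose L) (L-1)!`. -/
theorem prob_directed_cycle_bound
    {Ω : Type*} [MeasureSpace Ω] (P : Measure Ω) [IsProbabilityMeasure P]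
    (T K : ℕ) (hT : 2 ≤ T) (hK : 1 ≤ K)
    (a b ε : ℝ) (ha : 0 < a) (hab : a ≤ b) (hε : 0 < ε)
    (ρ : Fin T → Fin T → Fin K → ℝ)
    (hbd : ∀ i j, i ≠ j → ∀ k, a ≤ ρ i j k ∧ ρ i j k ≤ b)
    (hdisp : ∀ (L : ℕ), ∀ f : Fin (L + 2) → Fin T, Function.Injective f →
      ∃ ℓ : Fin (L + 2), 1 + ε ≤ ((1 : ℝ) / K) * ∑ k, ρ (f ℓ) (f (ℓ + 1)) k)
    (w : Fin T → Ω → (Fin K → ℝ))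
    (hmeas : ∀ i, Measurable (w i))
    (hindep : iIndepFun w P)
    (hdist : ∀ i, P.map (w i) = simplexUniform K) :
    P {ω | ∃ (L : ℕ) (f : Fin (L + 2) → Fin T), Function.Injective f ∧
        ∀ ℓ : Fin (L + 2), ∑ k, ρ (f ℓ) (f (ℓ + 1)) k * w (f (ℓ + 1)) ω k ≤ 1}
      ≤ (∑ L ∈ Finset.Icc 2 T, (Nat.choose T L * Nat.factorial (L - 1) : ℝ≥0∞)) *
        ENNReal.ofReal (Real.exp (-(K * ε ^ 2) / (4 * (b - a) ^ 2))) :=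
  prob_directed_cycle_bound_general P T K a b ε hε ρ hbd hdisp w hmeas hdist
end

section
/- Let ρ ∈ [a,b]^K with 0 < a ≤ b, let w ~ Uniform(Δ_{K−1}), set e = ⟨ρ, w⟩ and ρ̄ = (1/K)∑_k ρ^k. Then for any δ > 0, P(e < ρ̄ − δ) ≤ exp(−K δ² / (4(b − a + δ)²)). -/
open MeasureTheory ProbabilityTheory Finset

/-!
Write `w = Y / ∑ Y` with `Y` i.i.d. `Exp(1)`. Almost surely the event `⟨ρ, w⟩ < ρ̄ - δ` forces
`∑ α_k Y_k ≤ 0` for `α_k = ρ_k - ρ̄ + δ`, where `∑ α_k = K δ` and `|α_k| ≤ c := b - a + δ`.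
Chernoff's bound at `-s`, with the `Exp(1)` moment generating function `1 / (1 - t)`, bounds
its probability by `∏ 1 / (1 + s α_k)`. Since `log (1 + x) ≥ x - x²` for `x ≥ -1/2`, this is
at most `exp (s² K c² - s K δ)`, and `s = δ / (2 c²)` gives `exp (-K δ² / (4 c²))`.
-/

open Real Set
open scoped BigOperators

lemma one_div_one_add_le_exp_sq_sub {x : ℝ} (hx : -1 / 2 ≤ x) :
    1 / (1 + x) ≤ exp (x ^ 2 - x) := by
  rw [div_le_iff₀ (by linarith)]
  rcases le_total 0 x with h | h
  · nlinarith [add_one_le_exp (x ^ 2 - x)]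
  · nlinarith [quadratic_le_exp_of_nonneg (x := x ^ 2 - x) (by nlinarith)]

lemma prod_one_div_one_add_le_exp_sum {ι : Type*} (s : Finset ι) {x : ι → ℝ}
    (hx : ∀ k ∈ s, -1 / 2 ≤ x k) :
    ∏ k ∈ s, 1 / (1 + x k) ≤ exp (∑ k ∈ s, (x k ^ 2 - x k)) := by
  rw [exp_sum]
  exact prod_le_prod (fun k hk => one_div_nonneg.2 (by linarith [hx k hk]))
    fun k hk => one_div_one_add_le_exp_sq_sub (hx k hk)

lemma sum_sub_mul_nonpos_of_sum_mul_div_lt {ι : Type*} [Fintype ι] {ρ Y : ι → ℝ} {r : ℝ}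
    (hY : ∀ k, 0 ≤ Y k) (h : ∑ k, ρ k * (Y k / ∑ j, Y j) < r) :
    ∑ k, (ρ k - r) * Y k ≤ 0 := by
  rcases (sum_nonneg fun k _ => hY k).eq_or_lt with hS | hS
  · have hY0 : ∀ k, Y k = 0 := fun k =>
      (sum_eq_zero_iff_of_nonneg fun j _ => hY j).1 hS.symm k (mem_univ k)
    simp [hY0]
  · have hsplit : ∑ k, (ρ k - r) * Y k = ∑ k, ρ k * Y k - r * ∑ k, Y k := by
      simp only [sub_mul, sum_sub_distrib, mul_sum]
    simp only [← mul_div_assoc, ← sum_div, div_lt_iff₀ hS] at h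
    linarith

lemma abs_sub_expect_le {ι : Type*} [Fintype ι] {f : ι → ℝ} {a b : ℝ}
    (hf : ∀ k, a ≤ f k ∧ f k ≤ b) (k : ι) : |f k - 𝔼 j, f j| ≤ b - a := by
  have hne : (univ : Finset ι).Nonempty := ⟨k, mem_univ k⟩
  have hlo := le_expect hne fun j _ => (hf j).1
  have hhi := expect_le hne fun j _ => (hf j).2
  rw [abs_le]
  constructor <;> linarith [hf k]

namespace ProbabilityTheory

instance : IsProbabilityMeasure (expMeasure 1) := isProbabilityMeasure_expMeasure one_pos

lemma ae_nonneg_expMeasure (r : ℝ) : ∀ᵐ x ∂expMeasure r, 0 ≤ x := by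
  simp only [ae_iff, not_le]
  exact (withDensity_apply _ measurableSet_Iio).trans (lintegral_gammaPDF_of_nonpos le_rfl)

lemma integral_expMeasure {r : ℝ} (hr : 0 ≤ r) (g : ℝ → ℝ) :
    ∫ x, g x ∂expMeasure r = ∫ x in Ioi 0, r * exp (-(r * x)) * g x := by
  rw [expMeasure, gammaMeasure, integral_withDensity_eq_integral_toReal_smul (f := gammaPDF 1 r)
    (measurable_gammaPDFReal 1 r).ennreal_ofReal (.of_forall fun _ => ENNReal.ofReal_lt_top),
    ← integral_Ici_eq_integral_Ioi, ← integral_indicator measurableSet_Ici]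
  congr 1 with x
  change (exponentialPDF r x).toReal • g x = _
  rw [exponentialPDF_eq, indicator_apply, smul_eq_mul]
  by_cases hx : 0 ≤ x
  · simp [hx, ENNReal.toReal_ofReal, mul_nonneg hr (exp_pos _).le]
  · simp [hx]

lemma mgf_id_expMeasure {r t : ℝ} (hr : 0 < r) (htr : t < r) :
    mgf id (expMeasure r) t = r / (r - t) := by
  have hexp (x : ℝ) : exp (-(r * x)) * exp (t * x) = exp ((t - r) * x) := by
    rw [← exp_add]; ring_nf
  simp only [mgf, integral_expMeasure hr.le, id, mul_assoc, hexp, integral_const_mul,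
    integral_exp_mul_Ioi (sub_neg.2 htr), mul_zero, exp_zero]
  rw [neg_div, ← div_neg, neg_sub, mul_one_div]

lemma mgf_pi_sum_mul {ι : Type*} [Fintype ι] (ν : Measure ℝ) [SigmaFinite ν] (α : ι → ℝ)
    (t : ℝ) :
    mgf (fun Y : ι → ℝ => ∑ k, α k * Y k) (Measure.pi fun _ => ν) t
      = ∏ k, mgf id ν (t * α k) := by
  have hexp (Y : ι → ℝ) : exp (t * ∑ k, α k * Y k) = ∏ k, exp (t * α k * Y k) := by
    rw [mul_sum, exp_sum]; simp only [mul_assoc]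
  simp only [mgf, hexp, id]
  exact integral_fintype_prod_eq_prod fun k y => exp (t * α k * y)

lemma measureReal_pi_expMeasure_sum_mul_nonpos_le {ι : Type*} [Fintype ι] {r t : ℝ}
    (hr : 0 < r) (ht : 0 ≤ t) {α : ι → ℝ} (hα : ∀ k, 0 < r + t * α k) :
    (Measure.pi fun _ : ι => expMeasure r).real {Y | ∑ k, α k * Y k ≤ 0}
      ≤ ∏ k, r / (r + t * α k) := by
  have := isProbabilityMeasure_expMeasure hr
  have hmgf : mgf (fun Y : ι → ℝ => ∑ k, α k * Y k) (Measure.pi fun _ => expMeasure r) (-t)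
      = ∏ k, r / (r + t * α k) := by
    rw [mgf_pi_sum_mul]
    refine prod_congr rfl fun k _ => ?_
    rw [mgf_id_expMeasure hr (by linarith [hα k]), neg_mul, sub_neg_eq_add]
  have hpos : 0 < ∏ k, r / (r + t * α k) := prod_pos fun k _ => div_pos hr (hα k)
  -- a non-integrable function would have integral `0`
  have hint : Integrable (fun Y : ι → ℝ => exp (-t * ∑ k, α k * Y k)) _ :=
    .of_integral_ne_zero (hmgf.trans_ne hpos.ne')
  simpa [hmgf] using measure_le_le_exp_mul_mgf 0 (neg_nonpos.2 ht) hint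

lemma measureReal_pi_expMeasure_sum_mul_nonpos_le_exp {ι : Type*} [Fintype ι] {α : ι → ℝ}
    {c δ : ℝ} (hδ : 0 < δ) (hδc : δ ≤ c) (hα : ∀ k, |α k| ≤ c)
    (hsum : ∑ k, α k = Fintype.card ι * δ) :
    (Measure.pi fun _ : ι => expMeasure 1).real {Y | ∑ k, α k * Y k ≤ 0}
      ≤ exp (-(Fintype.card ι * δ ^ 2) / (4 * c ^ 2)) := by
  have hc : 0 < c := hδ.trans_le hδc
  set s := δ / (2 * c ^ 2)
  have hs : 0 ≤ s := by positivity
  have hsc : s * c ≤ 1 / 2 := by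
    rw [div_mul_eq_mul_div, div_le_iff₀ (by positivity)]
    nlinarith
  have hsα (k : ι) : -1 / 2 ≤ s * α k := by
    nlinarith [mul_le_mul_of_nonneg_left (abs_le.1 (hα k)).1 hs]
  have hsq : ∑ k, α k ^ 2 ≤ Fintype.card ι * c ^ 2 := by
    simpa using sum_le_card_nsmul univ (fun k => α k ^ 2) (c ^ 2)
      fun k _ => sq_le_sq' (abs_le.1 (hα k)).1 (abs_le.1 (hα k)).2
  calc _ ≤ ∏ k, 1 / (1 + s * α k) :=
        measureReal_pi_expMeasure_sum_mul_nonpos_le one_pos hs fun k => by linarith [hsα k]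
    _ ≤ exp (∑ k, ((s * α k) ^ 2 - s * α k)) :=
        prod_one_div_one_add_le_exp_sum _ fun k _ => hsα k
    _ ≤ exp (-(Fintype.card ι * δ ^ 2) / (4 * c ^ 2)) := by
        rw [exp_le_exp, sum_sub_distrib, ← mul_sum, hsum]
        simp only [mul_pow, ← mul_sum]
        calc s ^ 2 * ∑ k, α k ^ 2 - s * (Fintype.card ι * δ)
            ≤ s ^ 2 * (Fintype.card ι * c ^ 2) - s * (Fintype.card ι * δ) := by gcongr
          _ = _ := by simp only [s]; field_simp; ring

end ProbabilityTheory

lemma simplexUniform_setOf_sum_mul_lt_le (K : ℕ) (ρ : Fin K → ℝ) (r : ℝ) :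
    simplexUniform K {w | ∑ k, ρ k * w k < r}
      ≤ Measure.pi (fun _ => expMeasure 1) {Y | ∑ k, (ρ k - r) * Y k ≤ 0} := by
  rw [simplexUniform, Measure.map_apply (by fun_prop) (measurableSet_lt
    (f := fun w : Fin K → ℝ => ∑ k, ρ k * w k) (by fun_prop) measurable_const)]
  refine measure_mono_ae ?_
  filter_upwards [Filter.eventually_all.2 fun _ : Fin K =>
    Measure.tendsto_eval_ae_ae.eventually (ae_nonneg_expMeasure 1)] with Y hY hlt
  exact sum_sub_mul_nonpos_of_sum_mul_div_lt hY hlt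

theorem lp_coefficient_concentration_general (K : ℕ)
    (a b δ : ℝ) (hab : a ≤ b) (hδ : 0 < δ)
    (ρ : Fin K → ℝ) (hbd : ∀ k, a ≤ ρ k ∧ ρ k ≤ b) :
    simplexUniform K {w | ∑ k, ρ k * w k < ((1 : ℝ) / K) * (∑ k, ρ k) - δ}
      ≤ ENNReal.ofReal (Real.exp (-(K * δ ^ 2) / (4 * (b - a + δ) ^ 2))) := by
  have hmean : (1 : ℝ) / K * ∑ j, ρ j = 𝔼 j, ρ j := by
    rw [Fintype.expect_eq_sum_div_card, Fintype.card_fin, one_div_mul_eq_div]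
  rw [hmean]
  set α : Fin K → ℝ := fun k => ρ k - (𝔼 j, ρ j - δ)
  have hα (k : Fin K) : |α k| ≤ b - a + δ := by
    simp only [α, sub_sub_eq_add_sub, add_sub_right_comm]
    exact (abs_add_le _ _).trans (by rw [abs_of_pos hδ]; linarith [abs_sub_expect_le hbd k])
  have hsum : ∑ k, α k = Fintype.card (Fin K) * δ := by
    simp only [α, sum_sub_distrib, sum_const, card_univ, nsmul_eq_mul,
      ← Fintype.card_mul_expect ρ]
    ring
  calc _ ≤ Measure.pi (fun _ => expMeasure 1) {Y | ∑ k, α k * Y k ≤ 0} :=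
        simplexUniform_setOf_sum_mul_lt_le K ρ _
    _ = ENNReal.ofReal ((Measure.pi fun _ => expMeasure 1).real {Y | ∑ k, α k * Y k ≤ 0}) :=
        (ofReal_measureReal (measure_ne_top _ _)).symm
    _ ≤ _ := ENNReal.ofReal_le_ofReal <| by
        simpa using measureReal_pi_expMeasure_sum_mul_nonpos_le_exp hδ (by linarith) hα hsum

/-- Concentration of the LP coefficient `e = ⟨ρ, w⟩` below its mean, the
Carli index `ρ̄ = (1/K) ∑ k, ρ k`: for `w` uniform on the simplex and `δ > 0`,
`P(e < ρ̄ - δ) ≤ exp (-K δ² / (4 (b - a + δ)²))`. -/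
theorem lp_coefficient_concentration (K : ℕ) (hK : 1 ≤ K)
    (a b δ : ℝ) (ha : 0 < a) (hab : a ≤ b) (hδ : 0 < δ)
    (ρ : Fin K → ℝ) (hbd : ∀ k, a ≤ ρ k ∧ ρ k ≤ b) :
    simplexUniform K {w | ∑ k, ρ k * w k < ((1 : ℝ) / K) * (∑ k, ρ k) - δ}
      ≤ ENNReal.ofReal (Real.exp (-(K * δ ^ 2) / (4 * (b - a + δ) ^ 2))) :=
  lp_coefficient_concentration_general K a b δ hab hδ ρ hbd
end
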